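/- arXiv:1905.05149 — 6 statements merged into one kernel-verified Lean document; each statement's English description precedes it below -/
import Mathlib

section
/- Let M be monotone on a real Hilbert space, λ > 0, and consider the proximal point iteration x_{i+1} = J_{λM}(x_i) starting from x₀. If x_* satisfies 0 ∈ M x_* and ‖x₀ - x_*‖ ≤ R, then for all i ≥ 1, ‖x_i - x_{i-1}‖² ≤ R²/i. -/
open InnerProductSpace

/-- Worst-case rate of the proximal point method for a monotone operator `M`:
if `0 ∈ M x⋆` and `‖x₀ - x⋆‖ ≤ R`, then `‖x_i - x_{i-1}‖² ≤ R²/i` for `i ≥ 1`. -/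
theorem proximal_point_rate
    {H : Type*} [NormedAddCommGroup H] [InnerProductSpace ℝ H]
    (M : Set (H × H)) (lam : ℝ) (hlam : 0 < lam)
    (hmono : ∀ p ∈ M, ∀ q ∈ M, ⟪p.1 - q.1, p.2 - q.2⟫_ℝ ≥ 0)
    (x : ℕ → H) (xs : H) (R : ℝ)
    (hxs : (xs, (0 : H)) ∈ M)
    (hiter : ∀ i : ℕ, (x (i + 1), lam⁻¹ • (x i - x (i + 1))) ∈ M)
    (hinit : ‖x 0 - xs‖ ≤ R) :
    ∀ i : ℕ, 1 ≤ i → ‖x i - x (i - 1)‖ ^ 2 ≤ R ^ 2 / i := by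
  have hlaminv : (0:ℝ) < lam⁻¹ := inv_pos.mpr hlam
  -- residuals are nonincreasing
  have hres : ∀ k : ℕ, ‖x (k+2) - x (k+1)‖ ≤ ‖x (k+1) - x k‖ := by
    intro k
    have h := hmono _ (hiter (k+1)) _ (hiter k)
    simp only at h
    rw [← smul_sub, real_inner_smul_right] at h
    have h2 : ⟪x (k+2) - x (k+1), (x (k+1) - x (k+2)) - (x k - x (k+1))⟫_ℝ ≥ 0 :=
      nonneg_of_mul_nonneg_right h hlaminv
    set u := x (k+2) - x (k+1) with hu
    set v := x (k+1) - x k with hv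
    have huv : (x (k+1) - x (k+2)) - (x k - x (k+1)) = -u + v := by
      rw [hu, hv]; abel
    rw [huv, inner_add_right, inner_neg_right, real_inner_self_eq_norm_sq] at h2
    have h3 : ⟪u, v⟫_ℝ ≤ ‖u‖ * ‖v‖ := real_inner_le_norm u v
    nlinarith [norm_nonneg u, norm_nonneg v]
  -- Fejér monotonicity
  have hfej : ∀ k : ℕ, ‖x (k+1) - xs‖ ^ 2 + ‖x (k+1) - x k‖ ^ 2 ≤ ‖x k - xs‖ ^ 2 := by
    intro k
    have h := hmono _ (hiter k) _ hxs
    simp only [sub_zero] at h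
    rw [real_inner_smul_right] at h
    have h2 : ⟪x (k+1) - xs, x k - x (k+1)⟫_ℝ ≥ 0 :=
      nonneg_of_mul_nonneg_right h hlaminv
    have hsplit : x k - xs = (x (k+1) - xs) + (x k - x (k+1)) := by abel
    have hexp : ‖x k - xs‖ ^ 2 = ‖x (k+1) - xs‖ ^ 2 +
        2 * ⟪x (k+1) - xs, x k - x (k+1)⟫_ℝ + ‖x k - x (k+1)‖ ^ 2 := by
      rw [hsplit]; exact norm_add_sq_real _ _
    have hnn : ‖x (k+1) - x k‖ = ‖x k - x (k+1)‖ := by rw [norm_sub_rev]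
    rw [hnn]
    linarith
  -- main induction
  have hmain : ∀ n : ℕ, ((n:ℝ)+1) * ‖x (n+1) - x n‖ ^ 2 + ‖x (n+1) - xs‖ ^ 2
      ≤ ‖x 0 - xs‖ ^ 2 := by
    intro n
    induction n with
    | zero => have := hfej 0; push_cast; linarith
    | succ n ih =>
      have h1 := hfej (n+1)
      have h2 := hres n
      have h2' : ‖x (n+2) - x (n+1)‖ ^ 2 ≤ ‖x (n+1) - x n‖ ^ 2 := by
        nlinarith [norm_nonneg (x (n+2) - x (n+1))]
      have hn : (0:ℝ) ≤ (n:ℝ) + 1 := by positivity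
      push_cast
      push_cast at ih
      nlinarith
  intro i hi
  obtain ⟨j, rfl⟩ := Nat.exists_eq_add_of_le hi
  have hj : 1 + j - 1 = j := by omega
  rw [hj]
  have h1 : ((j:ℝ)+1) * ‖x (j+1) - x j‖ ^ 2 ≤ R ^ 2 := by
    have := hmain j
    nlinarith [norm_nonneg (x (j+1) - xs), norm_nonneg (x 0 - xs)]
  have hx : x (1 + j) = x (j + 1) := by ring_nf
  rw [hx]
  rw [le_div_iff₀ (by positivity : (0:ℝ) < ((1 + j : ℕ):ℝ))]
  push_cast
  nlinarith
end

section
/- The (N+1)×(N+1) symmetric matrix S := ∑_{i=2}^N a_i A_{i-1,i}(h) + b_N B_N(h) + c C - u_N u_Nᵀ, with the paper's choices h_{i,k} = -2k/(i(i+1)) for k < i, h_{i,i} = 2i/(i+1), a_i = 2(i-1)i/N², b_N = 2/N, c = 1/N², equals (u_N - (1/N)u_{N+1})(u_N - (1/N)u_{N+1})ᵀ and is therefore positive semidefinite. -/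
/-
The `(p, q)` entry of `v ⊙ w` is `(v_p w_q + w_p v_q)/2` and every vector involved is a combination
of the `u i`, so the entrywise identity is a bilinear identity in the sequences `x i = (u i)_p`,
`y i = (u i)_q`, and it holds for arbitrary `x y : ℕ → ℝ`. With `T_m(x) = ∑_{k ≤ m} k x_k`, the
`h`-combination of the first `l` coordinates is `2l x_l/(l+1) - 2T_{l-1}(x)/(l(l+1))`, and these add
up over `l < N` to `2T_{N-1}(x)/N`. Hence `∑_{i=2}^N 2(i-1)i A_{i-1,i}` telescopes to
`2N(N-1) x_N y_N - 2(x_N T_{N-1}(y) + T_{N-1}(x) y_N)`, whose `T`-terms cancel those of `(2/N) B_N`.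
-/

open Finset Matrix

/- `stepCoeff` is the paper's `h`, `stepSum x l = ∑_{k ≤ l} h_{l,k} x_k`, and `consecutiveForm x y i`
is the bilinear form of `A_{i-1,i}(h)` evaluated on coordinate sequences `x`, `y`. -/
noncomputable def stepCoeff (i k : ℕ) : ℝ :=
  if k = i then 2 * i / (i + 1) else -(2 * k) / (i * (i + 1))

noncomputable def stepSum (x : ℕ → ℝ) (l : ℕ) : ℝ :=
  ∑ k ∈ range l, stepCoeff l (k + 1) * x (k + 1)

noncomputable def weightedSum (x : ℕ → ℝ) (m : ℕ) : ℝ :=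
  ∑ k ∈ range m, ((k : ℝ) + 1) * x (k + 1)

lemma weightedSum_succ (x : ℕ → ℝ) (m : ℕ) :
    weightedSum x (m + 1) = weightedSum x m + (m + 1) * x (m + 1) :=
  sum_range_succ _ _

lemma stepSum_succ (x : ℕ → ℝ) (l : ℕ) :
    stepSum x (l + 1) =
      2 * (l + 1) / (l + 2) * x (l + 1) - 2 / ((l + 1) * (l + 2)) * weightedSum x l := by
  have offDiag : ∀ k ∈ range l, stepCoeff (l + 1) (k + 1) * x (k + 1) =
      -(2 / ((l + 1) * (l + 2)) * (((k : ℝ) + 1) * x (k + 1))) := by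
    intro k hk
    rw [stepCoeff, if_neg (by simp at hk; omega)]
    push_cast
    ring
  rw [stepSum, sum_range_succ, sum_congr rfl offDiag, sum_neg_distrib, ← mul_sum, ← weightedSum,
    stepCoeff, if_pos rfl]
  push_cast
  ring

lemma sum_range_stepSum (x : ℕ → ℝ) (m : ℕ) :
    ∑ l ∈ range m, ∑ k ∈ range (l + 1), stepCoeff (l + 1) (k + 1) * x (k + 1) =
      2 / (m + 1) * weightedSum x m := by
  induction m with
  | zero => simp [weightedSum]
  | succ m ih =>
    rw [sum_range_succ, ih, ← stepSum, stepSum_succ, weightedSum_succ]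
    push_cast
    field_simp
    ring

noncomputable def consecutiveForm (x y : ℕ → ℝ) (i : ℕ) : ℝ :=
  (x (i - 1) - x i) * (y (i - 1) - y i) -
    ((x (i - 1) - x i) * stepSum y (i - 1) + stepSum x (i - 1) * (y (i - 1) - y i)) / 2

lemma sum_Icc_consecutiveForm (x y : ℕ → ℝ) (n : ℕ) :
    ∑ i ∈ Icc 2 (n + 1), 2 * ((i : ℝ) - 1) * i * consecutiveForm x y i =
      2 * n * (n + 1) * x (n + 1) * y (n + 1) -
        2 * (x (n + 1) * weightedSum y n + weightedSum x n * y (n + 1)) := by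
  induction n with
  | zero => simp [weightedSum]
  | succ n ih =>
    rw [sum_Icc_succ_top (by omega), ih, consecutiveForm, Nat.add_sub_cancel, stepSum_succ,
      stepSum_succ, weightedSum_succ, weightedSum_succ]
    push_cast
    field_simp
    ring

/-- The SDP certificate of Lemma 2 of the paper: with the choices
`h_{i,k} = -2k/(i(i+1))` for `k < i`, `h_{i,i} = 2i/(i+1)`,
`a_i = 2(i-1)i/N²`, `b_N = 2/N`, `c = 1/N²`, the matrix
`S = ∑_{i=2}^N a_i A_{i-1,i}(h) + b_N B_N(h) + c C - u_N u_Nᵀ`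
equals `(u_N - (1/N) u_{N+1})(u_N - (1/N) u_{N+1})ᵀ` and is positive semidefinite.
Indices are 1-based: `u i` is the `i`-th canonical basis vector of `ℝ^{N+1}`. -/
theorem pep_certificate_psd (N : ℕ) (hN : 2 ≤ N) :
    let u : ℕ → (Fin (N + 1) → ℝ) := fun i j => if (j : ℕ) + 1 = i then 1 else 0
    let odot : (Fin (N + 1) → ℝ) → (Fin (N + 1) → ℝ) → Matrix (Fin (N + 1)) (Fin (N + 1)) ℝ :=
      fun v w => (1 / 2 : ℝ) • (vecMulVec v w + vecMulVec w v)
    let h : ℕ → ℕ → ℝ := fun i k =>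
      if k = i then 2 * i / (i + 1) else -(2 * k) / (i * (i + 1))
    let A : ℕ → ℕ → Matrix (Fin (N + 1)) (Fin (N + 1)) ℝ := fun i j =>
      odot (u i - u j) (u i - u j) -
        odot (u i - u j)
          (∑ l ∈ Finset.Icc (i - 1) (j - 2), ∑ k ∈ Finset.range (l + 1),
            h (l + 1) (k + 1) • u (k + 1))
    let B : ℕ → Matrix (Fin (N + 1)) (Fin (N + 1)) ℝ := fun i =>
      vecMulVec (u i) (u i) - odot (u i) (u (N + 1)) +
        odot (u i)
          (∑ l ∈ Finset.range (i - 1), ∑ k ∈ Finset.range (l + 1),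
            h (l + 1) (k + 1) • u (k + 1))
    let C : Matrix (Fin (N + 1)) (Fin (N + 1)) ℝ := vecMulVec (u (N + 1)) (u (N + 1))
    let a : ℕ → ℝ := fun i => 2 * (i - 1 : ℝ) * i / (N : ℝ) ^ 2
    let S : Matrix (Fin (N + 1)) (Fin (N + 1)) ℝ :=
      (∑ i ∈ Finset.Icc 2 N, a i • A (i - 1) i) + (2 / (N : ℝ)) • B N +
        ((N : ℝ) ^ 2)⁻¹ • C - vecMulVec (u N) (u N)
    S = vecMulVec (u N - (N : ℝ)⁻¹ • u (N + 1)) (u N - (N : ℝ)⁻¹ • u (N + 1)) ∧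
      S.PosSemidef := by
  intro u odot h A B C a S
  have hh : h = stepCoeff := rfl
  obtain ⟨n, rfl⟩ : ∃ n, N = n + 1 := ⟨N - 1, by omega⟩
  have hS : S = vecMulVec (u (n + 1) - ((n + 1 : ℕ) : ℝ)⁻¹ • u (n + 1 + 1))
      (u (n + 1) - ((n + 1 : ℕ) : ℝ)⁻¹ • u (n + 1 + 1)) := by
    ext p q
    have hA : ∀ i ∈ Icc 2 (n + 1), a i * A (i - 1) i p q =
        (((n : ℝ) + 1) ^ 2)⁻¹ * (2 * ((i : ℝ) - 1) * i * consecutiveForm (u · p) (u · q) i) := by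
      intro i hi
      have hi2 : i - 1 - 1 = i - 2 := by omega
      have hi1 : i - 2 + 1 = i - 1 := by grind
      simp only [a, A, odot, hi2, hh, Icc_self, sum_singleton, Matrix.sub_apply, Matrix.smul_apply,
        Matrix.add_apply, vecMulVec_apply, Pi.sub_apply, Finset.sum_apply, Pi.smul_apply, smul_eq_mul]
      rw [consecutiveForm, stepSum, stepSum, hi1]
      push_cast
      ring
    have hB : B (n + 1) p q = u (n + 1) p * u (n + 1) q
        - (u (n + 1) p * u (n + 1 + 1) q + u (n + 1 + 1) p * u (n + 1) q) / 2
        + (u (n + 1) p * weightedSum (u · q) n + weightedSum (u · p) n * u (n + 1) q) / (n + 1) := by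
      simp only [B, odot, hh, Matrix.sub_apply, Matrix.smul_apply, Matrix.add_apply, vecMulVec_apply,
        Finset.sum_apply, Pi.smul_apply, smul_eq_mul, Nat.add_sub_cancel]
      rw [sum_range_stepSum (u · q), sum_range_stepSum (u · p)]
      ring
    simp only [S, C, Matrix.sub_apply, Matrix.smul_apply, Matrix.add_apply, Matrix.sum_apply,
      vecMulVec_apply, Pi.sub_apply, Pi.smul_apply, smul_eq_mul]
    rw [sum_congr rfl hA, ← mul_sum, sum_Icc_consecutiveForm, hB]
    push_cast
    field_simp
    ring
  exact ⟨hS, hS ▸ posSemidef_vecMulVec_self_star _⟩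
end

section
/- The general proximal point method with step coefficients h_{i,k} = -2k/(i(i+1)) for 1 ≤ k ≤ i-1 and h_{i,i} = 2i/(i+1) generates the same sequences {x_i}, {y_i} as the recursion y_{i+1} = x_{i+1} + (i/(i+2))(x_{i+1} - x_i) - (i/(i+2))(x_i - y_{i-1}), with x₀ = y₀ = y_{-1}, where in both methods x_{i+1} = J_{λM}(y_i). -/
/-- Equivalence (Proposition 1 of the paper): the general proximal point method with
step coefficients `h_{i,k} = -2k/(i(i+1))` for `k < i` and `h_{i,i} = 2i/(i+1)`
generates the same sequences as the efficient accelerated recursion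
`y_{i+1} = x_{i+1} + (i/(i+2))(x_{i+1} - x_i) - (i/(i+2))(x_i - y_{i-1})`,
starting from `x₀ = y₀ = y₋₁`, for any map `T = J_{λM}`.  Here `y'` and `x'`
denote the general method's iterates and `x`, `y` the accelerated ones, with the
index of `y` shifted so that `y 0 = y₀` and the recursion for `i ≥ 1` reads as below. -/
theorem general_ppm_equiv_accelerated
    {H : Type*} [AddCommGroup H] [Module ℝ H]
    (T : H → H)
    (h : ℕ → ℕ → ℝ)
    (hcoef : ∀ i k, 1 ≤ k → k < i → h i k = -(2 * k) / (i * (i + 1)))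
    (hcoef' : ∀ i, 1 ≤ i → h i i = 2 * i / (i + 1))
    (x y x' y' : ℕ → H)
    -- accelerated method
    (hx0 : x 0 = y 0)
    (hxacc : ∀ i : ℕ, x (i + 1) = T (y i))
    (hy1 : y 1 = x 1)
    (hyacc : ∀ i : ℕ, y (i + 2) =
      x (i + 2) + ((i + 1 : ℝ) / (i + 3)) • (x (i + 2) - x (i + 1))
        - ((i + 1 : ℝ) / (i + 3)) • (x (i + 1) - y i))
    -- general proximal point method
    (hy'0 : y' 0 = y 0)
    (hx'gen : ∀ i : ℕ, x' (i + 1) = T (y' i))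
    (hy'gen : ∀ i : ℕ, y' (i + 1) =
      y' i + ∑ k ∈ Finset.range (i + 1), h (i + 1) (k + 1) • (x' (k + 1) - y' k)) :
    (∀ i : ℕ, x' (i + 1) = x (i + 1)) ∧ ∀ i : ℕ, y' i = y i := by

  have A : ∀ i : ℕ, y (i + 1) = y i
      + (2 * ((i : ℝ) + 1) / ((i : ℝ) + 2)) • (x (i + 1) - y i)
      - (2 / (((i : ℝ) + 1) * ((i : ℝ) + 2))) •
          ∑ k ∈ Finset.range i, ((k : ℝ) + 1) • (x (k + 1) - y k) := by
    intro i
    induction i with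
    | zero =>
      simp [hy1]
    | succ n ih =>
      have h1 : ((n : ℝ) + 1) ≠ 0 := by positivity
      have h2 : ((n : ℝ) + 2) ≠ 0 := by positivity
      have h3 : ((n : ℝ) + 3) ≠ 0 := by positivity
      have hS : (∑ k ∈ Finset.range n, ((k : ℝ) + 1) • (x (k + 1) - y k))
          = ((((n : ℝ) + 1) * ((n : ℝ) + 2) / 2)) •
              (y n + (2 * ((n : ℝ) + 1) / ((n : ℝ) + 2)) • (x (n + 1) - y n) - y (n + 1)) := by
        rw [ih]
        match_scalars <;> field_simp <;> ring
      rw [Finset.sum_range_succ, hS, hyacc n]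
      push_cast
      match_scalars <;> field_simp <;> ring
  have key : ∀ i : ℕ, y (i + 1) = y i + ∑ k ∈ Finset.range (i + 1),
      h (i + 1) (k + 1) • (x (k + 1) - y k) := by
    intro i
    have h1 : ((i : ℝ) + 1) ≠ 0 := by positivity
    have h2 : ((i : ℝ) + 2) ≠ 0 := by positivity
    have hsum : ∑ k ∈ Finset.range i, h (i + 1) (k + 1) • (x (k + 1) - y k)
        = (-2 / (((i : ℝ) + 1) * ((i : ℝ) + 2))) •
            ∑ k ∈ Finset.range i, ((k : ℝ) + 1) • (x (k + 1) - y k) := by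
      rw [Finset.smul_sum]
      refine Finset.sum_congr rfl fun k hk => ?_
      rw [hcoef (i + 1) (k + 1) (by omega) (by simp at hk; omega), smul_smul]
      congr 1
      push_cast
      ring
    rw [Finset.sum_range_succ, hsum, hcoef' (i + 1) (by omega), A i]
    push_cast
    match_scalars <;> field_simp <;> ring
  have hy' : ∀ i, y' i = y i := by
    intro i
    induction i using Nat.strong_induction_on with
    | _ i ih =>
      match i with
      | 0 => exact hy'0
      | (j + 1) =>
        rw [hy'gen j, key j]
        congr 1
        · exact ih j (by omega)
        refine Finset.sum_congr rfl fun k hk => ?_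
        have hk' : k < j + 1 := Finset.mem_range.mp hk
        rw [hx'gen k, ih k (by omega), ← hxacc k]
  exact ⟨fun i => by rw [hx'gen i, hy' i, ← hxacc i], hy'⟩
end

section
/- Let M be a maximally monotone operator on a real Hilbert space, λ > 0, and let {x_i}, {y_i} be generated by the accelerated proximal point method: x₀ = y₀ = y_{-1}, x_{i+1} = J_{λM}(y_i), y_{i+1} = x_{i+1} + (i/(i+2))(x_{i+1} - x_i) - (i/(i+2))(x_i - y_{i-1}). If ‖x₀ - x_*‖ ≤ R for some x_* with 0 ∈ M x_*, then for all i ≥ 1, ‖x_i - y_{i-1}‖² ≤ R²/i². -/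
open InnerProductSpace

set_option maxHeartbeats 1000000 in
/-- Theorem 1 of the paper: the accelerated proximal point method for a (maximally)
monotone operator `M` satisfies `‖x_i - y_{i-1}‖² ≤ R²/i²` for `i ≥ 1`, where
`x₀ = y₀ = y₋₁`, `x_{i+1} = J_{λM}(y_i)`, and
`y_{i+1} = x_{i+1} + (i/(i+2))(x_{i+1} - x_i) - (i/(i+2))(x_i - y_{i-1})`. -/
theorem accelerated_ppm_rate
    {H : Type*} [NormedAddCommGroup H] [InnerProductSpace ℝ H]
    (M : Set (H × H)) (lam : ℝ) (hlam : 0 < lam)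
    (hmono : ∀ p ∈ M, ∀ q ∈ M, ⟪p.1 - q.1, p.2 - q.2⟫_ℝ ≥ 0)
    (x y : ℕ → H) (xs : H) (R : ℝ) (hR : 0 < R)
    (hxs : (xs, (0 : H)) ∈ M)
    (hx0 : x 0 = y 0)
    (hiter : ∀ i : ℕ, (x (i + 1), lam⁻¹ • (y i - x (i + 1))) ∈ M)
    (hy1 : y 1 = x 1)
    (hyacc : ∀ i : ℕ, y (i + 2) =
      x (i + 2) + ((i + 1 : ℝ) / (i + 3)) • (x (i + 2) - x (i + 1))
        - ((i + 1 : ℝ) / (i + 3)) • (x (i + 1) - y i))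
    (hinit : ‖x 0 - xs‖ ≤ R) :
    ∀ i : ℕ, 1 ≤ i → ‖x i - y (i - 1)‖ ^ 2 ≤ R ^ 2 / (i : ℝ) ^ 2 := by
  -- half-residual
  set s : ℕ → H := fun k => y k - x (k + 1) with hs
  have hlam' : (0 : ℝ) < lam⁻¹ := inv_pos.mpr hlam
  -- pairwise monotonicity inequality
  have hmono' : ∀ j k : ℕ, (0 : ℝ) ≤ ⟪x (j + 1) - x (k + 1), s j - s k⟫_ℝ := by
    intro j k
    have h := hmono _ (hiter j) _ (hiter k)
    simp only at h
    have heq : lam⁻¹ • (y j - x (j + 1)) - lam⁻¹ • (y k - x (k + 1))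
        = lam⁻¹ • (s j - s k) := by simp [hs, smul_sub]
    rw [heq, real_inner_smul_right] at h
    nlinarith
  -- monotonicity against the zero of M
  have hstar : ∀ k : ℕ, (0 : ℝ) ≤ ⟪x (k + 1) - xs, s k⟫_ℝ := by
    intro k
    have h := hmono _ (hiter k) _ hxs
    simp only [sub_zero] at h
    rw [real_inner_smul_right] at h
    nlinarith
  -- Halpern-form identity: (k+2) • y (k+1) = y 0 + (k+1) • (2 • x (k+1) - y k)
  have hH : ∀ k : ℕ, ((k : ℝ) + 2) • y (k + 1)
      = y 0 + ((k : ℝ) + 1) • ((2 : ℝ) • x (k + 1) - y k) := by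
    intro k
    induction k with
    | zero =>
      rw [hy1]
      push_cast
      module
    | succ k ih =>
      have h3 : ((k : ℝ) + 3) ≠ 0 := by positivity
      have hc : ((k : ℝ) + 3) * (((k : ℝ) + 1) / ((k : ℝ) + 3)) = (k : ℝ) + 1 := by
        field_simp
      have hy' := congrArg (fun v : H => ((k : ℝ) + 3) • v) (hyacc k)
      simp only [smul_add, smul_sub, smul_smul, hc] at hy'
      push_cast
      push_cast at ih
      linear_combination (norm := module) hy' + ih
  -- the potential function
  set ψ : ℕ → ℝ := fun k =>
    ((k : ℝ) * ((k : ℝ) + 1)) * ‖s k‖ ^ 2 - ((k : ℝ) + 1) * ⟪s k, y 0 - y k⟫_ℝ with hψ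
  -- descent of the potential
  have hdesc : ∀ k : ℕ, ψ (k + 1) ≤ ψ k := by
    intro k
    -- key inequality from monotonicity of consecutive iterates
    have hkey : ‖s (k + 1) - s k‖ ^ 2 ≤ ⟪s (k + 1) - s k, y (k + 1) - y k⟫_ℝ := by
      have h := hmono' (k + 1) k
      have hx : x (k + 1 + 1) - x (k + 1) = (y (k + 1) - y k) - (s (k + 1) - s k) := by
        simp only [hs]
        abel
      rw [hx, inner_sub_left, real_inner_self_eq_norm_sq] at h
      rw [real_inner_comm] at h
      linarith
    -- identities from the Halpern form
    have I1 : y 0 - y k = ((k : ℝ) + 2) • (y (k + 1) - y k) + (2 * ((k : ℝ) + 1)) • s k := by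
      linear_combination (norm := module) -(hH k)
    have I2 : y 0 - y (k + 1)
        = ((k : ℝ) + 1) • ((y (k + 1) - y k) + (2 : ℝ) • s k) := by
      linear_combination (norm := module) -(hH k)
    -- exact algebraic identity for the potential difference
    have hid : ψ k - ψ (k + 1)
        = ((k : ℝ) + 1) * ((k : ℝ) + 2) *
          (⟪s (k + 1) - s k, y (k + 1) - y k⟫_ℝ - ‖s (k + 1) - s k‖ ^ 2) := by
      simp only [hψ]
      push_cast
      rw [I1, I2]
      simp only [← real_inner_self_eq_norm_sq, inner_sub_left, inner_sub_right,
        inner_add_right, inner_smul_right, real_inner_smul_left]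
      rw [real_inner_comm (s (k+1)) (s k)]
      ring
    nlinarith [hkey, sq_nonneg ((k : ℝ) + 1)]
  -- the potential is nonpositive
  have hψ0 : ∀ k : ℕ, ψ k ≤ 0 := by
    intro k
    induction k with
    | zero => simp [hψ]
    | succ k ih => exact le_trans (hdesc k) ih
  -- conclude
  intro i hi
  obtain ⟨k, rfl⟩ : ∃ k, i = k + 1 := ⟨i - 1, (Nat.succ_pred_eq_of_pos hi).symm⟩
  simp only [Nat.add_sub_cancel]
  have hsk : x (k + 1) - y k = -(s k) := by simp [hs]
  rw [hsk, norm_neg]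
  set t := ‖s k‖ with ht
  have htnn : 0 ≤ t := norm_nonneg _
  -- bound ⟪s k, y 0 - y k⟫
  have hsplit : ⟪s k, y 0 - y k⟫_ℝ = ⟪s k, y 0 - xs⟫_ℝ - ⟪s k, y k - xs⟫_ℝ := by
    rw [← inner_sub_right]
    congr 1
    abel
  have hyk : ⟪s k, y k - xs⟫_ℝ = t ^ 2 + ⟪s k, x (k + 1) - xs⟫_ℝ := by
    have : y k - xs = s k + (x (k + 1) - xs) := by simp only [hs]; abel
    rw [this, inner_add_right, real_inner_self_eq_norm_sq]
  have hst : (0 : ℝ) ≤ ⟪s k, x (k + 1) - xs⟫_ℝ := by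
    rw [real_inner_comm]; exact hstar k
  have hR0 : ‖y 0 - xs‖ ≤ R := by rw [← hx0]; exact hinit
  have hCS : ⟪s k, y 0 - xs⟫_ℝ ≤ t * R := by
    calc ⟪s k, y 0 - xs⟫_ℝ ≤ ‖s k‖ * ‖y 0 - xs‖ := real_inner_le_norm _ _
    _ ≤ t * R := by
        gcongr
  have hP := hψ0 k
  simp only [hψ] at hP
  -- (k+1)^2 t^2 ≤ (k+1) t R
  have hkk : ((k : ℝ) + 1) ^ 2 * t ^ 2 ≤ ((k : ℝ) + 1) * (t * R) := by
    have h1 : ⟪s k, y 0 - y k⟫_ℝ ≤ t * R - t ^ 2 := by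
      rw [hsplit, hyk]; linarith
    have hk1 : (0 : ℝ) ≤ (k : ℝ) + 1 := by positivity
    nlinarith
  have hct : ((k : ℝ) + 1) * t ≤ R := by
    nlinarith [sq_nonneg (((k : ℝ) + 1) * t - R)]
  have hpos : (0 : ℝ) < ((k : ℝ) + 1 : ℝ) ^ 2 := by positivity
  push_cast
  rw [le_div_iff₀ hpos]
  nlinarith [mul_nonneg (by positivity : (0:ℝ) ≤ (k:ℝ)+1) htnn]
end

section
/- Suppose M is μ-strongly monotone and a method restarted every k iterations satisfies ‖x_{j,k} - y_{j,k-1}‖² ≤ ‖x_{j,0} - x_*‖²/k², where x_{j+1,0} = x_{j,k}, 0 ∈ M x_*, and (1/λ)(x_{j-1,k} - y_{j-1,k-1}) ∈ M x_{j,0}. Then for each j ≥ 1, ‖x_{j,k} - y_{j,k-1}‖² ≤ (1/(λ²μ²k²)) ‖x_{j-1,k} - y_{j-1,k-1}‖². -/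
open InnerProductSpace

/-- Linear rate of the restarted accelerated proximal point method for a `μ`-strongly
monotone operator `M`: if each outer cycle of `k` inner iterations satisfies the
`O(1/k²)` bound, restarts are chained by `x_{j+1,0} = x_{j,k}`, and
`(1/λ)(x_{j-1,k} - y_{j-1,k-1}) ∈ M x_{j,0}`, then
`‖x_{j,k} - y_{j,k-1}‖² ≤ (1/(λ²μ²k²)) ‖x_{j-1,k} - y_{j-1,k-1}‖²` for `j ≥ 1`. -/
theorem restarted_accelerated_ppm_linear_rate
    {H : Type*} [NormedAddCommGroup H] [InnerProductSpace ℝ H]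
    (M : Set (H × H)) (μ lam : ℝ) (hμ : 0 < μ) (hlam : 0 < lam)
    (hmono : ∀ p ∈ M, ∀ q ∈ M, ⟪p.1 - q.1, p.2 - q.2⟫_ℝ ≥ μ * ‖p.1 - q.1‖ ^ 2)
    (k : ℕ) (hk : 1 ≤ k)
    (x y : ℕ → ℕ → H) (xs : H)
    (hxs : (xs, (0 : H)) ∈ M)
    (hrate : ∀ j : ℕ, ‖x j k - y j (k - 1)‖ ^ 2 ≤ ‖x j 0 - xs‖ ^ 2 / (k : ℝ) ^ 2)
    (hrestart : ∀ j : ℕ, x (j + 1) 0 = x j k)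
    (hincl : ∀ j : ℕ, 1 ≤ j →
      (x j 0, lam⁻¹ • (x (j - 1) k - y (j - 1) (k - 1))) ∈ M) :
    ∀ j : ℕ, 1 ≤ j →
      ‖x j k - y j (k - 1)‖ ^ 2 ≤
        1 / (lam ^ 2 * μ ^ 2 * (k : ℝ) ^ 2) * ‖x (j - 1) k - y (j - 1) (k - 1)‖ ^ 2 := by
  intro j hj
  set u := x (j - 1) k - y (j - 1) (k - 1) with hu
  set a := x j 0 - xs with ha
  have hmono' := hmono _ (hincl j hj) _ hxs
  simp only [sub_zero] at hmono'
  have h1 : μ * ‖a‖ ^ 2 ≤ lam⁻¹ * (‖a‖ * ‖u‖) := by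
    calc μ * ‖a‖ ^ 2 ≤ ⟪a, lam⁻¹ • u⟫_ℝ := hmono'
    _ = lam⁻¹ * ⟪a, u⟫_ℝ := real_inner_smul_right a u lam⁻¹
    _ ≤ lam⁻¹ * (‖a‖ * ‖u‖) := by
        have := real_inner_le_norm a u
        nlinarith [inv_pos.mpr hlam]
  have h2 : lam * (μ * ‖a‖) ≤ ‖u‖ := by
    rcases eq_or_lt_of_le (norm_nonneg a) with h | h
    · rw [← h]
      simp [norm_nonneg u]
    · have h2' : μ * ‖a‖ ≤ lam⁻¹ * ‖u‖ := by nlinarith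
      have := mul_le_mul_of_nonneg_left h2' hlam.le
      calc lam * (μ * ‖a‖) ≤ lam * (lam⁻¹ * ‖u‖) := this
      _ = ‖u‖ := by field_simp
  have h3 : ‖a‖ ^ 2 ≤ ‖u‖ ^ 2 / (lam ^ 2 * μ ^ 2) := by
    rw [le_div_iff₀ (by positivity)]
    nlinarith [norm_nonneg a, norm_nonneg u,
      mul_le_mul h2 h2 (by positivity) (norm_nonneg u)]
  have hkpos : (0:ℝ) < (k:ℝ) ^ 2 := by
    have : (1:ℝ) ≤ (k:ℝ) := by exact_mod_cast hk
    positivity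
  calc ‖x j k - y j (k - 1)‖ ^ 2 ≤ ‖a‖ ^ 2 / (k:ℝ) ^ 2 := hrate j
  _ ≤ (‖u‖ ^ 2 / (lam ^ 2 * μ ^ 2)) / (k:ℝ) ^ 2 := by
      gcongr
  _ = 1 / (lam ^ 2 * μ ^ 2 * (k:ℝ) ^ 2) * ‖u‖ ^ 2 := by
      ring
end

section
/- Let L : H → H be a bounded invertible linear operator and M maximally monotone. If x̃_{i+1} = (I + λ L* M L)^{-1}(x̃_i) and we set x_i := L x̃_i and P := (L L*)^{-1}, then the sequence {x_i} satisfies x_{i+1} = (P + λM)^{-1}(P x_i), i.e., P x_i - P x_{i+1} ∈ λ M x_{i+1}. In particular, x̃_{i+1} = J_{λL*ML}(x̃_i) implies P(x_i - x_{i+1}) ∈ λ M x_{i+1}. -/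
open InnerProductSpace ContinuousLinearMap

/-- Preconditioned proximal point method (Remark 1 of the paper): if
`x̃_{i+1} = (I + λL*ML)⁻¹(x̃_i)`, i.e. `(x̃_i - x̃_{i+1})/λ ∈ L*M(L x̃_{i+1})`, then
with `x_i := L x̃_i` and `P := (LL*)⁻¹` one has `P x_i - P x_{i+1} ∈ λ M x_{i+1}`,
i.e. `P(x_i - x_{i+1}) ∈ λ M x_{i+1}`. -/
theorem preconditioned_ppm
    {H : Type*} [NormedAddCommGroup H] [InnerProductSpace ℝ H] [CompleteSpace H]
    (M : Set (H × H))
    (L P : H →L[ℝ] H)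
    (hLbij : Function.Bijective L)
    (hP : ∀ u : H, P (L (adjoint L u)) = u)
    (lam : ℝ) (hlam : 0 < lam)
    (xt : ℕ → H) (x : ℕ → H)
    (hx : ∀ i : ℕ, x i = L (xt i))
    (hiter : ∀ i : ℕ, ∃ w : H, (L (xt (i + 1)), w) ∈ M ∧
      lam⁻¹ • (xt i - xt (i + 1)) = adjoint L w) :
    ∀ i : ℕ, ∃ w : H, (x (i + 1), w) ∈ M ∧ P (x i) - P (x (i + 1)) = lam • w := by
  intro i
  obtain ⟨w, hw, heq⟩ := hiter i
  refine ⟨w, by rwa [hx], ?_⟩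
  have h2 : P (L (adjoint L w)) = w := hP w
  rw [← heq] at h2
  have : xt i - xt (i + 1) = lam • (lam⁻¹ • (xt i - xt (i + 1))) := by
    rw [smul_smul, mul_inv_cancel₀ hlam.ne', one_smul]
  calc P (x i) - P (x (i + 1)) = P (L (xt i - xt (i + 1))) := by
        rw [hx, hx, ← map_sub, ← map_sub]
    _ = lam • P (L (lam⁻¹ • (xt i - xt (i + 1)))) := by
        rw [← map_smul, ← map_smul, ← this]
    _ = lam • w := by rw [h2]
end
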